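/- Let Λ be a Coxeter diagram containing an admissible D₃-like subdiagram Λ′ whose three consecutive vertices are b₁, b₃, b₂. Suppose the vertex set of Δ_{Λ,Λ′}, with the partial order induced by b₁ < b₃ < b₂, is bowtie free. Then Δ_{Λ,Λ′} is weakly flag if and only if the (b₁,b₂)-subdivision of Δ_{Λ,Λ′} is downward flag. -/

import Mathlib

open scoped Pointwise

/-- A *Coxeter diagram* on a vertex set `S`: a symmetric labeling `M` with `M s s = 1`,
and for `s ≠ t` the label `M s t` lies in `{2, 3, 4, …} ∪ {∞}`, where `0` encodes the
label `∞` and label `2` means that `s` and `t` are not joined by an edge. -/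
structure CoxDiagram (S : Type*) where
  M : S → S → ℕ
  symm : ∀ s t, M s t = M t s
  diag : ∀ s, M s s = 1
  offDiag : ∀ s t, s ≠ t → M s t ≠ 1

namespace CoxDiagram

variable {S : Type*}

/-- The underlying graph of a Coxeter diagram: `s` and `t` are joined exactly when
`M s t ≠ 2`. -/
def graph (Λ : CoxDiagram S) : SimpleGraph S where
  Adj s t := s ≠ t ∧ Λ.M s t ≠ 2
  symm := by
    constructor
    intro s t h
    exact ⟨h.1.symm, by rw [Λ.symm t s]; exact h.2⟩
  loopless := by
    constructor
    intro s h
    exact h.1 rfl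

/-- The alternating word `s t s t ⋯` of length `n` in the free group on `S`. -/
def altWord (s t : S) : ℕ → FreeGroup S
  | 0 => 1
  | n + 1 => FreeGroup.of s * altWord t s n

/-- The braid relations of the Artin group of `Λ` : for each pair `s, t` with
`M s t ≠ ∞`, the relation `sts⋯ = tst⋯` (both sides alternating of length `M s t`). -/
def artinRels (Λ : CoxDiagram S) : Set (FreeGroup S) :=
  {w | ∃ s t : S, Λ.M s t ≠ 0 ∧
    w = altWord s t (Λ.M s t) * (altWord t s (Λ.M s t))⁻¹}

/-- The Artin group of the Coxeter diagram `Λ`. -/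
def ArtinGroup (Λ : CoxDiagram S) : Type _ := PresentedGroup (artinRels Λ)

instance (Λ : CoxDiagram S) : Group (ArtinGroup Λ) :=
  inferInstanceAs (Group (PresentedGroup (artinRels Λ)))

/-- The standard generator of the Artin group corresponding to `s ∈ S`. -/
def gen (Λ : CoxDiagram S) (s : S) : ArtinGroup Λ := PresentedGroup.of s

/-- The standard parabolic subgroup `A_T` of the Artin group, generated by `T ⊆ S`. -/
def parab (Λ : CoxDiagram S) (T : Set S) : Subgroup (ArtinGroup Λ) :=
  Subgroup.closure (Λ.gen '' T)

/-- A vertex of (a subdivision of) the Artin complex of `Λ`: a left coset of the standard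
parabolic subgroup `A_{S ∖ T}` generated by the complement of a set `T` of generators.
Vertices of the Artin complex itself are those with `T` a singleton `{s}` (of type `ŝ`). -/
def PVertex (Λ : CoxDiagram S) : Type _ := Σ T : Set S, ArtinGroup Λ ⧸ Λ.parab Tᶜ

/-- The cosets corresponding to two vertices intersect. -/
def pmeets {Λ : CoxDiagram S} (v w : PVertex Λ) : Prop :=
  ∃ g : ArtinGroup Λ, QuotientGroup.mk g = v.2 ∧ QuotientGroup.mk g = w.2

/-- Adjacency in the Artin complex: the vertices are distinct and their cosets meet. -/
def adjV {Λ : CoxDiagram S} (v w : PVertex Λ) : Prop := v ≠ w ∧ pmeets v w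

/-- `a` and `b` are connected by an edge path of `G` all of whose vertices lie in `U`. -/
def ConnIn {V : Type*} (G : SimpleGraph V) (U : Set V) (a b : V) : Prop :=
  Relation.ReflTransGen (fun u v => u ∈ U ∧ v ∈ U ∧ G.Adj u v) a b

/-- The induced subdiagram on `S'` is *admissible*: vertices of `S'` in different
components of `S' ∖ {s}` lie in different components of `S ∖ {s}`. -/
def Admissible (Λ : CoxDiagram S) (S' : Set S) : Prop :=
  ∀ s ∈ S', ∀ t ∈ S', ∀ r ∈ S', t ≠ s → r ≠ s →
    ConnIn Λ.graph {x : S | x ≠ s} t r → ConnIn Λ.graph {x : S | x ∈ S' ∧ x ≠ s} t r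

/-- `s` belongs to the smallest subtree of (the tree) `S'` containing `A`, i.e. `s`
belongs to every connected subset of `S'` containing `A`. -/
def InMinSubtree (Λ : CoxDiagram S) (S' : Set S) (A : Set S) (s : S) : Prop :=
  ∀ T : Set S, T ⊆ S' → (∀ a ∈ T, ∀ b ∈ T, ConnIn Λ.graph T a b) → A ⊆ T → s ∈ T

/-- The relative Artin complex `Δ_{Λ, S'}` satisfies the *labeled 4-cycle condition*:
every induced 4-cycle `x₁ x₂ x₃ x₄` of vertex types `ŝ₁ ŝ₂ ŝ₃ ŝ₄` with `sᵢ ∈ S'` admits a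
vertex adjacent to all four whose type `ŝ` satisfies that `s` lies in the smallest
subtree of `S'` containing `s₁, s₂, s₃, s₄`. -/
def Labeled4Cycle (Λ : CoxDiagram S) (S' : Set S) : Prop :=
  ∀ (x₁ x₂ x₃ x₄ : PVertex Λ) (s₁ s₂ s₃ s₄ : S),
    s₁ ∈ S' → s₂ ∈ S' → s₃ ∈ S' → s₄ ∈ S' →
    x₁.1 = {s₁} → x₂.1 = {s₂} → x₃.1 = {s₃} → x₄.1 = {s₄} →
    adjV x₁ x₂ → adjV x₂ x₃ → adjV x₃ x₄ → adjV x₄ x₁ →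
    x₁ ≠ x₃ → x₂ ≠ x₄ → ¬ pmeets x₁ x₃ → ¬ pmeets x₂ x₄ →
    ∃ (x : PVertex Λ) (s : S), s ∈ S' ∧ x.1 = {s} ∧
      adjV x x₁ ∧ adjV x x₂ ∧ adjV x x₃ ∧ adjV x x₄ ∧
      InMinSubtree Λ S' {s₁, s₂, s₃, s₄} s

/-- A `D_{n+1}`-like subdiagram, given by `b 1, …, b (n+1)`: the vertices `b 1` and `b 2`
are each joined to `b 3`, and `b 3, b 4, …, b (n+1)` is a path; the subdiagram is induced
(no other edges) and the edge labels are arbitrary. -/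
def IsDLike (Λ : CoxDiagram S) (n : ℕ) (b : ℕ → S) : Prop :=
  2 ≤ n ∧
  (∀ i j, 1 ≤ i → i ≤ n + 1 → 1 ≤ j → j ≤ n + 1 → b i = b j → i = j) ∧
  (∀ i j, 1 ≤ i → i ≤ n + 1 → 1 ≤ j → j ≤ n + 1 →
    (Λ.graph.Adj (b i) (b j) ↔
      ((i = 1 ∧ j = 3) ∨ (i = 3 ∧ j = 1) ∨ (i = 2 ∧ j = 3) ∨ (i = 3 ∧ j = 2) ∨
        (3 ≤ i ∧ j = i + 1) ∨ (3 ≤ j ∧ i = j + 1))))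

/-- The vertex set of a `D`-like subdiagram. -/
def DSet (b : ℕ → S) (n : ℕ) : Set S := {s : S | ∃ i, 1 ≤ i ∧ i ≤ n + 1 ∧ s = b i}

/-- The `τ`-value of a vertex-type of the `(b 1, b 2)`-subdivision: `τ = 1` on types
`b̂ 1`, `b̂ 2`; `τ = 2` on midpoint vertices (cosets of `A_{S ∖ {b 1, b 2}}`); and
`τ = i` on type `b̂ i` for `3 ≤ i ≤ n + 1`. -/
def subdivTau (b : ℕ → S) (n : ℕ) (T : Set S) (k : ℕ) : Prop :=
  (k = 1 ∧ (T = {b 1} ∨ T = {b 2})) ∨ (k = 2 ∧ T = ({b 1, b 2} : Set S)) ∨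
    (3 ≤ k ∧ k ≤ n + 1 ∧ T = {b k})

/-- `v` is a vertex of the `(b 1, b 2)`-subdivision of `Δ_{Λ, Λ₀}`. -/
def SubOk {Λ : CoxDiagram S} (b : ℕ → S) (n : ℕ) (v : PVertex Λ) : Prop :=
  v.1 = ({b 1, b 2} : Set S) ∨ ∃ i, 1 ≤ i ∧ i ≤ n + 1 ∧ v.1 = {b i}

/-- The partial order on the vertices of the `(b 1, b 2)`-subdivision: `v < w` iff the
cosets intersect and `τ v < τ w`. -/
def SubLt {Λ : CoxDiagram S} (b : ℕ → S) (n : ℕ) (v w : PVertex Λ) : Prop :=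
  pmeets v w ∧ ∃ k l, subdivTau b n v.1 k ∧ subdivTau b n w.1 l ∧ k < l

end CoxDiagram

section RelDefs

variable {X : Type*} (lt : X → X → Prop)

/-- The reflexive closure of a strict relation. -/
def RelLe (a b : X) : Prop := lt a b ∨ a = b

/-- A relation is *bowtie free* if every quasi-bowtie has a center. -/
def RelBowtieFree : Prop :=
  ∀ x₁ y₁ x₂ y₂ : X, lt x₁ y₁ → lt x₁ y₂ → lt x₂ y₁ → lt x₂ y₂ →
    ∃ z : X, RelLe lt x₁ z ∧ RelLe lt x₂ z ∧ RelLe lt z y₁ ∧ RelLe lt z y₂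

/-- *Upward flag*: three pairwise upper-bounded elements have a common upper bound. -/
def RelUpwardFlag : Prop :=
  ∀ p₁ p₂ p₃ : X, (∃ q, RelLe lt p₁ q ∧ RelLe lt p₂ q) →
    (∃ q, RelLe lt p₂ q ∧ RelLe lt p₃ q) → (∃ q, RelLe lt p₁ q ∧ RelLe lt p₃ q) →
    ∃ q, RelLe lt p₁ q ∧ RelLe lt p₂ q ∧ RelLe lt p₃ q

/-- *Downward flag*: three pairwise lower-bounded elements have a common lower bound. -/
def RelDownwardFlag : Prop :=
  ∀ p₁ p₂ p₃ : X, (∃ q, RelLe lt q p₁ ∧ RelLe lt q p₂) →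
    (∃ q, RelLe lt q p₂ ∧ RelLe lt q p₃) → (∃ q, RelLe lt q p₁ ∧ RelLe lt q p₃) →
    ∃ q, RelLe lt q p₁ ∧ RelLe lt q p₂ ∧ RelLe lt q p₃

/-- `q` is a maximal element. -/
def RelMaximalEl (q : X) : Prop := ∀ w, ¬ lt q w

/-- `q` is a minimal element. -/
def RelMinimalEl (q : X) : Prop := ∀ w, ¬ lt w q

/-- *Weakly upward flag*: whenever each pair among three elements has a non-maximal upper
bound, the three have a common upper bound. -/
def RelWeaklyUpwardFlag : Prop :=
  ∀ p₁ p₂ p₃ : X,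
    (∃ q, RelLe lt p₁ q ∧ RelLe lt p₂ q ∧ ¬ RelMaximalEl lt q) →
    (∃ q, RelLe lt p₂ q ∧ RelLe lt p₃ q ∧ ¬ RelMaximalEl lt q) →
    (∃ q, RelLe lt p₁ q ∧ RelLe lt p₃ q ∧ ¬ RelMaximalEl lt q) →
    ∃ q, RelLe lt p₁ q ∧ RelLe lt p₂ q ∧ RelLe lt p₃ q

/-- *Weakly downward flag*: dual of weakly upward flag. -/
def RelWeaklyDownwardFlag : Prop :=
  ∀ p₁ p₂ p₃ : X,
    (∃ q, RelLe lt q p₁ ∧ RelLe lt q p₂ ∧ ¬ RelMinimalEl lt q) →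
    (∃ q, RelLe lt q p₂ ∧ RelLe lt q p₃ ∧ ¬ RelMinimalEl lt q) →
    (∃ q, RelLe lt q p₁ ∧ RelLe lt q p₃ ∧ ¬ RelMinimalEl lt q) →
    ∃ q, RelLe lt q p₁ ∧ RelLe lt q p₂ ∧ RelLe lt q p₃

/-- *Weakly flag*: weakly upward and weakly downward flag. -/
def RelWeaklyFlag : Prop := RelWeaklyUpwardFlag lt ∧ RelWeaklyDownwardFlag lt

end RelDefs

open CoxDiagram

namespace CoxDiagram

variable {S : Type*}

/-- `v` is a vertex of the relative Artin complex `Δ_{Λ,Λ′}` for the `D₃`-like subdiagram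
with consecutive vertices `b 1, b 3, b 2`. -/
def D3Ok {Λ : CoxDiagram S} (b : ℕ → S) (v : PVertex Λ) : Prop :=
  v.1 = {b 1} ∨ v.1 = {b 2} ∨ v.1 = {b 3}

/-- The partial order on the vertex set of `Δ_{Λ,Λ′}` induced by `b 1 < b 3 < b 2`:
`v < w` iff `v` and `w` are adjacent (their cosets meet) and the type of `v` precedes the
type of `w` in the order `b 1 < b 3 < b 2`. -/
def d3Lt {Λ : CoxDiagram S} (b : ℕ → S) (v w : PVertex Λ) : Prop :=
  pmeets v w ∧
    ((v.1 = {b 1} ∧ (w.1 = {b 3} ∨ w.1 = {b 2})) ∨ (v.1 = {b 3} ∧ w.1 = {b 2}))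

end CoxDiagram

/-!
Both sides reduce to a Helly property of the vertices of type `b̂ 3`: three of them that pairwise
have a common neighbour of type `ŝ` have a common neighbour of type `b̂ 1` or `b̂ 2`
(`StarHelly`), for `s = b 1` and for `s = b 2`.

The two facts that drive everything are: admissibility splits `A_{S ∖ {b 3}}` as
`A_{S ∖ {b 1}} · A_{S ∖ {b 2}}`, which makes `x < z < y` imply `x < y` in `Δ_{Λ,Λ'}`; and
bowtie freeness, which implies that two distinct vertices of type `b̂ 1` below a vertex `z` of
type `b̂ 3` and below `w` force `z ≤ w`.

Weak upward flagness is the `b̂ 1`-version of the Helly property: a non-maximal strict upper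
bound has type `b̂ 3`. Exchanging `b 1` and `b 2` reverses the order, so weak downward
flagness is the `b̂ 2`-version. In the subdivision every vertex lies above a minimal one (of
type `b̂ 1` or `b̂ 2`), and the minimal vertices below a given vertex form a point, an edge
`{x, y}` (below a midpoint) or the star of a vertex of type `b̂ 3`. Downward flagness is the
Helly property of this family of sets, which reduces to the two versions above by a case
analysis on the shapes.
-/

section RelationFacts

variable {X : Type*} {lt : X → X → Prop}

theorem RelLe.trans [IsTrans X lt] {a c d : X} (h₁ : RelLe lt a c) (h₂ : RelLe lt c d) :
    RelLe lt a d := by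
  rcases h₁ with h₁ | rfl
  · rcases h₂ with h₂ | rfl
    · exact Or.inl (_root_.trans h₁ h₂)
    · exact Or.inl h₁
  · exact h₂

theorem RelLe.lt_of_ne {a a' q : X} (h : RelLe lt a q) (h' : RelLe lt a' q) (hne : a ≠ a')
    (hmin : RelMinimalEl lt a) : lt a q := by
  rcases h with h | rfl
  · exact h
  · rcases h' with h' | rfl
    · exact absurd h' (hmin a')
    · exact absurd rfl hne

theorem relLe_flip {a c : X} : RelLe (flip lt) a c ↔ RelLe lt c a :=
  or_congr Iff.rfl eq_comm

theorem relLe_subtype {p : X → Prop} {a c : Subtype p} :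
    RelLe (fun v w : Subtype p => lt v.1 w.1) a c ↔ RelLe lt a.1 c.1 :=
  or_congr Iff.rfl Subtype.ext_iff

theorem RelBowtieFree.flip (h : RelBowtieFree lt) : RelBowtieFree (flip lt) := by
  intro x₁ y₁ x₂ y₂ h₁₁ h₁₂ h₂₁ h₂₂
  obtain ⟨z, hy₁, hy₂, hx₁, hx₂⟩ := h y₁ x₁ y₂ x₂ h₁₁ h₂₁ h₁₂ h₂₂
  exact ⟨z, relLe_flip.2 hx₁, relLe_flip.2 hx₂, relLe_flip.2 hy₁, relLe_flip.2 hy₂⟩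

theorem relWeaklyUpwardFlag_flip : RelWeaklyUpwardFlag (flip lt) ↔ RelWeaklyDownwardFlag lt := by
  simp only [RelWeaklyUpwardFlag, RelWeaklyDownwardFlag, relLe_flip]
  rfl

/-- If one of the three elements lies below another, the bound of the other two bounds all
three. -/
theorem relWeaklyUpwardFlag_of_strict_bounds [IsTrans X lt]
    (h : ∀ p₁ p₂ p₃ q₁₂ q₁₃ q₂₃, lt p₁ q₁₂ → lt p₂ q₁₂ → lt p₁ q₁₃ → lt p₃ q₁₃ →
      lt p₂ q₂₃ → lt p₃ q₂₃ → ¬ RelMaximalEl lt q₁₂ → ¬ RelMaximalEl lt q₁₃ →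
      ¬ RelMaximalEl lt q₂₃ → ∃ q, RelLe lt p₁ q ∧ RelLe lt p₂ q ∧ RelLe lt p₃ q) :
    RelWeaklyUpwardFlag lt := by
  intro p₁ p₂ p₃ ⟨q₁₂, h₁₂, h₂₁, m₁₂⟩ ⟨q₂₃, h₂₃, h₃₂, m₂₃⟩ ⟨q₁₃, h₁₃, h₃₁, m₁₃⟩
  rcases h₁₂ with h₁₂ | rfl
  · rcases h₂₁ with h₂₁ | rfl
    · rcases h₁₃ with h₁₃ | rfl
      · rcases h₃₁ with h₃₁ | rfl
        · rcases h₂₃ with h₂₃ | rfl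
          · rcases h₃₂ with h₃₂ | rfl
            · exact h p₁ p₂ p₃ q₁₂ q₁₃ q₂₃ h₁₂ h₂₁ h₁₃ h₃₁ h₂₃ h₃₂ m₁₂ m₁₃ m₂₃
            · exact ⟨q₁₃, Or.inl h₁₃, Or.inl (_root_.trans h₂₃ h₃₁), Or.inl h₃₁⟩
          · exact ⟨q₁₂, Or.inl h₁₂, Or.inl h₂₁, h₃₂.trans (Or.inl h₂₁)⟩
        · exact ⟨q₂₃, RelLe.trans (Or.inl h₁₃) h₃₂, h₂₃, h₃₂⟩
      · exact ⟨q₁₂, Or.inl h₁₂, Or.inl h₂₁, h₃₁.trans (Or.inl h₁₂)⟩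
    · exact ⟨q₂₃, RelLe.trans (Or.inl h₁₂) h₂₃, h₂₃, h₃₂⟩
  · exact ⟨q₁₃, h₁₃, h₂₁.trans h₁₃, h₃₁⟩

end RelationFacts

section Helly

variable {α : Type*} {A B C : Set α}

theorem Set.pair_inter_nonempty {a c : α} :
    (({a, c} : Set α) ∩ A).Nonempty ↔ a ∈ A ∨ c ∈ A := by
  simp [Set.Nonempty]

theorem Set.pair_ne_singleton {a c d : α} (h : a ≠ c) : ({a, c} : Set α) ≠ {d} := by
  intro e
  have ha := e ▸ Set.mem_insert a {c}
  have hc := e ▸ Set.mem_insert_of_mem a (Set.mem_singleton c)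
  simp_all

def HellyTriple (A B C : Set α) : Prop :=
  (A ∩ B).Nonempty → (B ∩ C).Nonempty → (A ∩ C).Nonempty → (A ∩ B ∩ C).Nonempty

theorem HellyTriple.swap₁₂ (h : HellyTriple A B C) : HellyTriple B A C := by
  intro hBA hAC hBC
  rw [Set.inter_comm B A]
  exact h (Set.inter_comm B A ▸ hBA) hBC hAC

theorem HellyTriple.swap₂₃ (h : HellyTriple A B C) : HellyTriple A C B := by
  intro hAC hCB hAB
  rw [Set.inter_right_comm]
  exact h hAB (Set.inter_comm C B ▸ hCB) hAC

theorem HellyTriple.of_singleton {a : α} : HellyTriple {a} B C := by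
  intro hB _ hC
  rw [Set.singleton_inter_nonempty] at hB hC
  exact ⟨a, ⟨rfl, hB⟩, hC⟩

theorem eq_or_eq_of_pair_inter_pair {P : α → Prop} {x₁ x₂ y₁ y₂ : α} (hx₁ : P x₁) (hx₂ : P x₂)
    (hy₁ : ¬ P y₁) (hy₂ : ¬ P y₂) (h : ({x₁, y₁} ∩ {x₂, y₂} : Set α).Nonempty) :
    x₁ = x₂ ∨ y₁ = y₂ := by
  obtain ⟨w, h₁, h₂⟩ := h
  simp only [Set.mem_insert_iff, Set.mem_singleton_iff] at h₁ h₂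
  grind

theorem HellyTriple.of_pairs {P : α → Prop} {x₁ x₂ x₃ y₁ y₂ y₃ : α} (hx₁ : P x₁) (hx₂ : P x₂)
    (hx₃ : P x₃) (hy₁ : ¬ P y₁) (hy₂ : ¬ P y₂) (hy₃ : ¬ P y₃) :
    HellyTriple {x₁, y₁} {x₂, y₂} {x₃, y₃} := by
  intro h₁₂ h₂₃ h₁₃
  have := eq_or_eq_of_pair_inter_pair hx₁ hx₂ hy₁ hy₂ h₁₂
  have := eq_or_eq_of_pair_inter_pair hx₂ hx₃ hy₂ hy₃ h₂₃
  have := eq_or_eq_of_pair_inter_pair hx₁ hx₃ hy₁ hy₃ h₁₃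
  obtain ⟨rfl, rfl⟩ | ⟨rfl, rfl⟩ : x₁ = x₂ ∧ x₁ = x₃ ∨ y₁ = y₂ ∧ y₁ = y₃ := by grind
  · exact ⟨x₁, ⟨Or.inl rfl, Or.inl rfl⟩, Or.inl rfl⟩
  · exact ⟨y₁, ⟨Or.inr rfl, Or.inr rfl⟩, Or.inr rfl⟩

end Helly

theorem Subgroup.exists_mul_eq_of_mem_closure_union {G : Type*} [Group G] {s t : Set G}
    (hst : ∀ x ∈ s, ∀ y ∈ t, Commute x y) {g : G} (hg : g ∈ Subgroup.closure (s ∪ t)) :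
    ∃ u ∈ Subgroup.closure s, ∃ v ∈ Subgroup.closure t, u * v = g := by
  have hle : Subgroup.closure s ≤ Subgroup.normalizer (Subgroup.closure t : Set G) := by
    refine le_trans ?_ (Subgroup.centralizer_le_normalizer _)
    rw [Subgroup.centralizer_closure, Subgroup.closure_le]
    exact fun x hx y hy => (hst x hx y hy).eq.symm
  rw [Subgroup.closure_union, ← SetLike.mem_coe,
    Subgroup.coe_mul_of_left_le_normalizer_right _ _ hle] at hg
  exact Set.mem_mul.1 hg

namespace CoxDiagram

variable {S : Type*} {Λ : CoxDiagram S} {b : ℕ → S}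

section Cosets

theorem IsDLike.ne {n : ℕ} (hD : IsDLike Λ n b) {i j : ℕ} (hi : 1 ≤ i ∧ i ≤ n + 1)
    (hj : 1 ≤ j ∧ j ≤ n + 1) (hij : i ≠ j) : b i ≠ b j :=
  fun h => hij (hD.2.1 i j hi.1 hi.2 hj.1 hj.2 h)

theorem gen_commute {s t : S} (h : Λ.M s t = 2) : Commute (Λ.gen s) (Λ.gen t) := by
  have hrel : altWord s t 2 * (altWord t s 2)⁻¹ ∈ artinRels Λ := ⟨s, t, by omega, by rw [h]⟩
  have h₁ := (QuotientGroup.eq_one_iff _).2 (Subgroup.subset_normalClosure hrel)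
  simp only [altWord, mul_one] at h₁
  rwa [QuotientGroup.mk_mul, QuotientGroup.mk_inv, mul_inv_eq_one] at h₁

theorem parab_mono {T T' : Set S} (h : T ⊆ T') : Λ.parab T ≤ Λ.parab T' :=
  Subgroup.closure_mono (Set.image_mono h)

theorem pmeets_comm {v w : PVertex Λ} : pmeets v w ↔ pmeets w v :=
  ⟨fun ⟨g, h₁, h₂⟩ => ⟨g, h₂, h₁⟩, fun ⟨g, h₁, h₂⟩ => ⟨g, h₂, h₁⟩⟩

theorem pmeets_self (v : PVertex Λ) : pmeets v v :=
  let ⟨g, hg⟩ := QuotientGroup.mk_surjective v.2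
  ⟨g, hg, hg⟩

theorem eq_of_pmeets {v w : PVertex Λ} (htype : v.1 = w.1) (h : pmeets v w) : v = w := by
  obtain ⟨T, c⟩ := v
  obtain ⟨T', c'⟩ := w
  obtain rfl : T = T' := htype
  obtain ⟨g, h₁, h₂⟩ := h
  exact congrArg (Sigma.mk T) (h₁.symm.trans h₂)

theorem exists_pmeets (v : PVertex Λ) (T : Set S) : ∃ w : PVertex Λ, w.1 = T ∧ pmeets w v := by
  obtain ⟨g, hg⟩ := QuotientGroup.mk_surjective v.2
  exact ⟨⟨T, g⟩, rfl, g, rfl, hg⟩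

/-- A vertex of smaller type has the larger coset, so meeting passes through it. -/
theorem pmeets_trans_of_subset {u v w : PVertex Λ} (huv : u.1 ⊆ v.1) (h₁ : pmeets u v)
    (h₂ : pmeets v w) : pmeets u w := by
  obtain ⟨g, hgu, hgv⟩ := h₁
  obtain ⟨h, hhv, hhw⟩ := h₂
  refine ⟨h, ?_, hhw⟩
  rw [← hgu, QuotientGroup.eq]
  exact parab_mono (Set.compl_subset_compl.2 huv) (QuotientGroup.eq.1 (hhv.trans hgv.symm))

theorem not_connIn_b₂_b₁ (hD : IsDLike Λ 2 b) (hadm : Admissible Λ (DSet b 2)) :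
    ¬ ConnIn Λ.graph {x | x ≠ b 3} (b 2) (b 1) := by
  intro h
  have mem : ∀ i, 1 ≤ i → i ≤ 3 → b i ∈ DSet b 2 := fun i h₁ h₃ => ⟨i, h₁, h₃, rfl⟩
  have h' := hadm (b 3) (mem 3 (by norm_num) le_rfl) (b 2) (mem 2 (by norm_num) (by norm_num))
    (b 1) (mem 1 le_rfl (by norm_num)) (hD.ne (by norm_num) (by norm_num) (by norm_num))
    (hD.ne (by norm_num) (by norm_num) (by norm_num)) h
  suffices ∀ c, ConnIn Λ.graph {x | x ∈ DSet b 2 ∧ x ≠ b 3} (b 2) c → c = b 2 from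
    hD.ne (by norm_num) (by norm_num) (by norm_num) (this _ h')
  intro c hc
  induction hc with
  | refl => rfl
  | tail _ hstep ih =>
    obtain ⟨-, ⟨⟨j, hj₁, hj₃, rfl⟩, hj⟩, hadj⟩ := hstep
    rw [ih, hD.2.2 2 j (by norm_num) (by norm_num) hj₁ hj₃] at hadj
    obtain rfl : j = 3 := by omega
    exact absurd rfl hj

/-- The component of `b 1` in `Λ ∖ {b 3}` avoids `b 2` and commutes with the rest. -/
theorem exists_mul_eq_of_mem_parab_b₃ (hD : IsDLike Λ 2 b) (hadm : Admissible Λ (DSet b 2))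
    {g : ArtinGroup Λ} (hg : g ∈ Λ.parab {b 3}ᶜ) :
    ∃ u ∈ Λ.parab {b 1}ᶜ, ∃ v ∈ Λ.parab {b 2}ᶜ, u * v = g := by
  set C : Set S := {s | s ≠ b 3 ∧ ConnIn Λ.graph {x | x ≠ b 3} s (b 1)}
  have hb₁ : b 1 ∈ C := ⟨hD.ne (by norm_num) (by norm_num) (by norm_num), .refl⟩
  have hb₂ : b 2 ∉ C := fun h => not_connIn_b₂_b₁ hD hadm h.2
  have hcomm : ∀ x ∈ Λ.gen '' ({b 3}ᶜ \ C), ∀ y ∈ Λ.gen '' C, Commute x y := by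
    rintro - ⟨s, ⟨hs, hsC⟩, rfl⟩ - ⟨t, ⟨ht, htC⟩, rfl⟩
    refine gen_commute (not_not.1 fun hM => hsC ⟨hs, .head ⟨hs, ht, ?_, hM⟩ htC⟩)
    rintro rfl
    exact hsC ⟨ht, htC⟩
  have hsplit : ({b 3}ᶜ : Set S) = ({b 3}ᶜ \ C) ∪ C :=
    (Set.sdiff_union_of_subset fun s hs => hs.1).symm
  rw [parab, hsplit, Set.image_union] at hg
  obtain ⟨u, hu, v, hv, rfl⟩ := Subgroup.exists_mul_eq_of_mem_closure_union hcomm hg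
  refine ⟨u, parab_mono ?_ hu, v, parab_mono ?_ hv, rfl⟩
  · exact fun s hs hs₁ => hs.2 ((Set.mem_singleton_iff.1 hs₁) ▸ hb₁)
  · exact fun s hs hs₂ => hb₂ ((Set.mem_singleton_iff.1 hs₂) ▸ hs)

end Cosets

section RelativeComplex

theorem d3Ok_swap : D3Ok (Λ := Λ) (b ∘ Equiv.swap 1 2) = D3Ok b := by
  ext v
  simp [D3Ok, Equiv.swap_apply_of_ne_of_ne]
  tauto

theorem d3Lt_swap : d3Lt (Λ := Λ) (b ∘ Equiv.swap 1 2) = flip (d3Lt b) := by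
  ext v w
  simp [d3Lt, flip, Equiv.swap_apply_of_ne_of_ne, pmeets_comm (v := v)]
  tauto

theorem bowtieFree_swap
    (hbow : RelBowtieFree (fun v w : {v : PVertex Λ // D3Ok b v} => d3Lt b v.1 w.1)) :
    RelBowtieFree (fun v w : {v : PVertex Λ // D3Ok (b ∘ Equiv.swap 1 2) v} =>
      d3Lt (b ∘ Equiv.swap 1 2) v.1 w.1) := by
  rw [d3Ok_swap, d3Lt_swap]
  exact hbow.flip

theorem RelLe.pmeets {v w : PVertex Λ} (h : RelLe (d3Lt b) v w) : pmeets v w :=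
  h.elim And.left fun h => h ▸ pmeets_self v

theorem d3Lt_chain (h₁₂ : b 1 ≠ b 2) (h₁₃ : b 1 ≠ b 3) (h₂₃ : b 2 ≠ b 3) {u v w : PVertex Λ}
    (huv : d3Lt b u v) (hvw : d3Lt b v w) : u.1 = {b 1} ∧ v.1 = {b 3} ∧ w.1 = {b 2} := by
  obtain ⟨-, ⟨hu, hv | hv⟩ | ⟨hu, hv⟩⟩ := huv <;>
    obtain ⟨-, ⟨hv', hw | hw⟩ | ⟨hv', hw⟩⟩ := hvw <;> simp_all

theorem not_d3Lt_of_b₁ (h₁₂ : b 1 ≠ b 2) (h₁₃ : b 1 ≠ b 3) {v w : PVertex Λ}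
    (hw : w.1 = {b 1}) : ¬ d3Lt b v w := by
  rintro ⟨-, ⟨-, hw' | hw'⟩ | ⟨-, hw'⟩⟩ <;> simp_all

theorem not_d3Lt_of_b₂ (h₁₂ : b 1 ≠ b 2) (h₂₃ : b 2 ≠ b 3) {v w : PVertex Λ}
    (hv : v.1 = {b 2}) : ¬ d3Lt b v w := by
  rintro ⟨-, ⟨hv', -⟩ | ⟨hv', -⟩⟩ <;> simp_all

theorem d3Lt.left_b₁ (h₂₃ : b 2 ≠ b 3) {v w : PVertex Λ} (h : d3Lt b v w) (hw : w.1 = {b 3}) :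
    v.1 = {b 1} := by
  obtain ⟨-, ⟨hv, -⟩ | ⟨-, hw'⟩⟩ := h <;> simp_all

theorem isTrans_d3Lt (hD : IsDLike Λ 2 b) (hadm : Admissible Λ (DSet b 2)) :
    IsTrans (PVertex Λ) (d3Lt b) := by
  refine ⟨fun x z y hxz hzy => ?_⟩
  obtain ⟨hx, hz, hy⟩ := d3Lt_chain (hD.ne (by norm_num) (by norm_num) (by norm_num))
    (hD.ne (by norm_num) (by norm_num) (by norm_num))
    (hD.ne (by norm_num) (by norm_num) (by norm_num)) hxz hzy
  refine ⟨?_, Or.inl ⟨hx, Or.inr hy⟩⟩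
  obtain ⟨g, hgx, hgz⟩ := hxz.1
  obtain ⟨h, hhz, hhy⟩ := hzy.1
  have hgh : g⁻¹ * h ∈ Λ.parab {b 3}ᶜ := hz ▸ QuotientGroup.eq.1 (hgz.trans hhz.symm)
  obtain ⟨u, hu, v, hv, huv⟩ := exists_mul_eq_of_mem_parab_b₃ hD hadm hgh
  refine ⟨g * u, ?_, ?_⟩
  · rw [← hgx, QuotientGroup.eq, hx]
    simpa using inv_mem hu
  · rw [← hhy, QuotientGroup.eq, hy, show h = g * (u * v) by rw [huv]; group]
    simpa [mul_assoc] using hv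

theorem pmeets_trans_b₃ [IsTrans (PVertex Λ) (d3Lt b)] {x z y : PVertex Λ} (hx : x.1 = {b 1})
    (hz : z.1 = {b 3}) (hy : y.1 = {b 2}) (hxz : pmeets x z) (hzy : pmeets z y) : pmeets x y :=
  (IsTrans.trans (r := d3Lt b) x z y ⟨hxz, Or.inl ⟨hx, Or.inl hz⟩⟩ ⟨hzy, Or.inr ⟨hz, hy⟩⟩).1

/-- The center of the quasi-bowtie `x₁, x₂ < z, w` lies strictly above some `xᵢ`, hence has
type `b̂ 3` or `b̂ 2`, and lies below `z`, hence is `z`. -/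
theorem relLe_of_bowtie (h₁₂ : b 1 ≠ b 2) (h₁₃ : b 1 ≠ b 3) (h₂₃ : b 2 ≠ b 3)
    (hbow : RelBowtieFree (fun v w : {v : PVertex Λ // D3Ok b v} => d3Lt b v.1 w.1))
    {x₁ x₂ z w : PVertex Λ} (hne : x₁ ≠ x₂) (hz : z.1 = {b 3}) (h₁z : d3Lt b x₁ z)
    (h₂z : d3Lt b x₂ z) (h₁w : d3Lt b x₁ w) (h₂w : d3Lt b x₂ w) : RelLe (d3Lt b) z w := by
  have ok : ∀ {v w : PVertex Λ}, d3Lt b v w → D3Ok b v ∧ D3Ok b w := by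
    rintro v w ⟨-, ⟨hv, hw | hw⟩ | ⟨hv, hw⟩⟩ <;> simp [D3Ok, hv, hw]
  obtain ⟨c, hc₁, hc₂, hcz, hcw⟩ := hbow ⟨x₁, (ok h₁z).1⟩ ⟨z, (ok h₁z).2⟩ ⟨x₂, (ok h₂z).1⟩
    ⟨w, (ok h₁w).2⟩ h₁z h₁w h₂z h₂w
  simp only [relLe_subtype] at hc₁ hc₂ hcz hcw
  obtain ⟨x, hxc⟩ : ∃ x, d3Lt b x c.1 := by
    rcases hc₁ with h | rfl
    · exact ⟨_, h⟩
    · exact hc₂.elim (fun h => ⟨_, h⟩) fun h => absurd h.symm hne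
  rcases hcz with hcz | hcz
  · exact absurd hz (by simp_all [(d3Lt_chain h₁₂ h₁₃ h₂₃ hxc hcz).2.2])
  · exact hcz ▸ hcw

section Bowtie

variable (h₁₂ : b 1 ≠ b 2) (h₁₃ : b 1 ≠ b 3) (h₂₃ : b 2 ≠ b 3)
  (hbow : RelBowtieFree (fun v w : {v : PVertex Λ // D3Ok b v} => d3Lt b v.1 w.1))

include h₁₂ h₁₃ h₂₃ hbow

theorem pmeets_of_two_b₁ {x₁ x₂ z y : PVertex Λ} (hx₁ : x₁.1 = {b 1}) (hx₂ : x₂.1 = {b 1})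
    (hz : z.1 = {b 3}) (hy : y.1 = {b 2}) (hne : x₁ ≠ x₂) (h₁z : pmeets x₁ z)
    (h₂z : pmeets x₂ z) (h₁y : pmeets x₁ y) (h₂y : pmeets x₂ y) : pmeets z y :=
  (relLe_of_bowtie h₁₂ h₁₃ h₂₃ hbow hne hz ⟨h₁z, Or.inl ⟨hx₁, Or.inl hz⟩⟩
    ⟨h₂z, Or.inl ⟨hx₂, Or.inl hz⟩⟩ ⟨h₁y, Or.inl ⟨hx₁, Or.inr hy⟩⟩
    ⟨h₂y, Or.inl ⟨hx₂, Or.inr hy⟩⟩).pmeets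

theorem pmeets_of_two_b₂ {y₁ y₂ z x : PVertex Λ} (hy₁ : y₁.1 = {b 2}) (hy₂ : y₂.1 = {b 2})
    (hz : z.1 = {b 3}) (hx : x.1 = {b 1}) (hne : y₁ ≠ y₂) (hz₁ : pmeets z y₁)
    (hz₂ : pmeets z y₂) (hx₁ : pmeets x y₁) (hx₂ : pmeets x y₂) : pmeets x z := by
  have hle := relLe_of_bowtie (b := b ∘ Equiv.swap 1 2) (by simpa using h₁₂.symm)
    (by simpa [Equiv.swap_apply_of_ne_of_ne] using h₂₃)
    (by simpa [Equiv.swap_apply_of_ne_of_ne] using h₁₃) (bowtieFree_swap hbow) hne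
    (z := z) (w := x) (by simpa [Equiv.swap_apply_of_ne_of_ne] using hz)
  simp only [d3Lt_swap, flip, relLe_flip] at hle
  exact (hle ⟨hz₁, Or.inr ⟨hz, hy₁⟩⟩ ⟨hz₂, Or.inr ⟨hz, hy₂⟩⟩ ⟨hx₁, Or.inl ⟨hx, Or.inr hy₁⟩⟩
    ⟨hx₂, Or.inl ⟨hx, Or.inr hy₂⟩⟩).pmeets

end Bowtie

end RelativeComplex

section WeakFlagness

/-- The vertices of type `b̂ 1` or `b̂ 2`, at the two ends of the path `b 1, b 3, b 2`. -/
def IsEnd (b : ℕ → S) (v : PVertex Λ) : Prop := v.1 = {b 1} ∨ v.1 = {b 2}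

def StarHelly (Λ : CoxDiagram S) (b : ℕ → S) (s : S) : Prop :=
  ∀ z₁ z₂ z₃ x₁₂ x₁₃ x₂₃ : PVertex Λ, z₁.1 = {b 3} → z₂.1 = {b 3} → z₃.1 = {b 3} →
    x₁₂.1 = {s} → x₁₃.1 = {s} → x₂₃.1 = {s} → pmeets x₁₂ z₁ → pmeets x₁₂ z₂ →
    pmeets x₁₃ z₁ → pmeets x₁₃ z₃ → pmeets x₂₃ z₂ → pmeets x₂₃ z₃ →
    ∃ v, IsEnd b v ∧ pmeets v z₁ ∧ pmeets v z₂ ∧ pmeets v z₃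

theorem starHelly_swap {s : S} : Λ.StarHelly (b ∘ Equiv.swap 1 2) s ↔ Λ.StarHelly b s := by
  simp only [StarHelly, IsEnd, Function.comp_apply, Equiv.swap_apply_left,
    Equiv.swap_apply_right, Equiv.swap_apply_of_ne_of_ne (show (3 : ℕ) ≠ 1 by decide)
      (show (3 : ℕ) ≠ 2 by decide), or_comm]

variable (h₁₂ : b 1 ≠ b 2) (h₁₃ : b 1 ≠ b 3) (h₂₃ : b 2 ≠ b 3)
  (hbow : RelBowtieFree (fun v w : {v : PVertex Λ // D3Ok b v} => d3Lt b v.1 w.1))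

include h₁₂ h₁₃ h₂₃ hbow

theorem starHelly_of_weaklyUpwardFlag
    (hW : RelWeaklyUpwardFlag (fun v w : {v : PVertex Λ // D3Ok b v} => d3Lt b v.1 w.1)) :
    Λ.StarHelly b (b 1) := by
  intro z₁ z₂ z₃ x₁₂ x₁₃ x₂₃ hz₁ hz₂ hz₃ hx₁₂ hx₁₃ hx₂₃ m₁₂₁ m₁₂₂ m₁₃₁ m₁₃₃ m₂₃₂ m₂₃₃
  by_cases e₁ : x₁₂ = x₁₃
  · exact ⟨x₁₂, Or.inl hx₁₂, m₁₂₁, m₁₂₂, e₁ ▸ m₁₃₃⟩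
  by_cases e₂ : x₁₂ = x₂₃
  · exact ⟨x₁₂, Or.inl hx₁₂, m₁₂₁, m₁₂₂, e₂ ▸ m₂₃₃⟩
  by_cases e₃ : x₁₃ = x₂₃
  · exact ⟨x₁₃, Or.inl hx₁₃, m₁₃₁, e₃ ▸ m₂₃₂, m₁₃₃⟩
  have lt_b₃ : ∀ {x z : PVertex Λ}, x.1 = {b 1} → z.1 = {b 3} → pmeets x z → d3Lt b x z :=
    fun hx hz h => ⟨h, Or.inl ⟨hx, Or.inl hz⟩⟩
  have not_max : ∀ {z : PVertex Λ} (hz : z.1 = {b 3}), ¬ RelMaximalEl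
      (fun v w : {v : PVertex Λ // D3Ok b v} => d3Lt b v.1 w.1) ⟨z, Or.inr (Or.inr hz)⟩ := by
    intro z hz hmax
    obtain ⟨y, hy, hyz⟩ := exists_pmeets z {b 2}
    exact hmax ⟨y, Or.inr (Or.inl hy)⟩ ⟨pmeets_comm.1 hyz, Or.inr ⟨hz, hy⟩⟩
  obtain ⟨Q, hQ₁₂, hQ₁₃, hQ₂₃⟩ := hW ⟨x₁₂, Or.inl hx₁₂⟩ ⟨x₁₃, Or.inl hx₁₃⟩ ⟨x₂₃, Or.inl hx₂₃⟩
    ⟨⟨z₁, _⟩, Or.inl (lt_b₃ hx₁₂ hz₁ m₁₂₁), Or.inl (lt_b₃ hx₁₃ hz₁ m₁₃₁), not_max hz₁⟩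
    ⟨⟨z₃, _⟩, Or.inl (lt_b₃ hx₁₃ hz₃ m₁₃₃), Or.inl (lt_b₃ hx₂₃ hz₃ m₂₃₃), not_max hz₃⟩
    ⟨⟨z₂, _⟩, Or.inl (lt_b₃ hx₁₂ hz₂ m₁₂₂), Or.inl (lt_b₃ hx₂₃ hz₂ m₂₃₂), not_max hz₂⟩
  simp only [relLe_subtype] at hQ₁₂ hQ₁₃ hQ₂₃
  have l₁₂ := hQ₁₂.lt_of_ne hQ₁₃ e₁ fun w => not_d3Lt_of_b₁ h₁₂ h₁₃ hx₁₂
  have l₁₃ := hQ₁₃.lt_of_ne hQ₁₂ (Ne.symm e₁) fun w => not_d3Lt_of_b₁ h₁₂ h₁₃ hx₁₃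
  have l₂₃ := hQ₂₃.lt_of_ne hQ₁₂ (Ne.symm e₂) fun w => not_d3Lt_of_b₁ h₁₂ h₁₃ hx₂₃
  have hz₁Q := relLe_of_bowtie h₁₂ h₁₃ h₂₃ hbow e₁ hz₁ (lt_b₃ hx₁₂ hz₁ m₁₂₁)
    (lt_b₃ hx₁₃ hz₁ m₁₃₁) l₁₂ l₁₃
  have hz₂Q := relLe_of_bowtie h₁₂ h₁₃ h₂₃ hbow e₂ hz₂ (lt_b₃ hx₁₂ hz₂ m₁₂₂)
    (lt_b₃ hx₂₃ hz₂ m₂₃₂) l₁₂ l₂₃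
  have hz₃Q := relLe_of_bowtie h₁₂ h₁₃ h₂₃ hbow e₃ hz₃ (lt_b₃ hx₁₃ hz₃ m₁₃₃)
    (lt_b₃ hx₂₃ hz₃ m₂₃₃) l₁₃ l₂₃
  rcases l₁₂.2.elim (fun h => h.2) (fun h => Or.inr h.2) with hQ | hQ
  · have h₁ := eq_of_pmeets (hz₁.trans hQ.symm) hz₁Q.pmeets
    have h₃ := eq_of_pmeets (hz₃.trans hQ.symm) hz₃Q.pmeets
    exact ⟨x₁₂, Or.inl hx₁₂, m₁₂₁, m₁₂₂, h₃ ▸ h₁ ▸ m₁₂₁⟩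
  · exact ⟨Q.1, Or.inr hQ, pmeets_comm.1 hz₁Q.pmeets, pmeets_comm.1 hz₂Q.pmeets,
      pmeets_comm.1 hz₃Q.pmeets⟩

theorem weaklyUpwardFlag_of_starHelly [IsTrans (PVertex Λ) (d3Lt b)]
    (hH : Λ.StarHelly b (b 1)) :
    RelWeaklyUpwardFlag (fun v w : {v : PVertex Λ // D3Ok b v} => d3Lt b v.1 w.1) := by
  have : IsTrans {v : PVertex Λ // D3Ok b v} (fun v w => d3Lt b v.1 w.1) :=
    ⟨fun _ _ _ => _root_.trans⟩
  refine relWeaklyUpwardFlag_of_strict_bounds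
    fun p₁ p₂ p₃ q₁₂ q₁₃ q₂₃ l₁₁₂ l₂₁₂ l₁₁₃ l₃₁₃ l₂₂₃ l₃₂₃ n₁₂ n₁₃ n₂₃ => ?_
  have type_b₃ : ∀ {p q : {v : PVertex Λ // D3Ok b v}}, d3Lt b p.1 q.1 →
      ¬ RelMaximalEl (fun v w : {v : PVertex Λ // D3Ok b v} => d3Lt b v.1 w.1) q →
      q.1.1 = {b 3} := by
    intro p q hpq hq
    refine (hpq.2.elim (fun h => h.2) (fun h => Or.inr h.2)).resolve_right fun hq₂ => hq ?_
    exact fun w => not_d3Lt_of_b₂ h₁₂ h₂₃ hq₂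
  have hq₁₂ := type_b₃ l₁₁₂ n₁₂
  have hq₁₃ := type_b₃ l₁₁₃ n₁₃
  have hq₂₃ := type_b₃ l₂₂₃ n₂₃
  obtain ⟨v, hv, hv₁₂, hv₁₃, hv₂₃⟩ := hH q₁₂.1 q₁₃.1 q₂₃.1 p₁.1 p₂.1 p₃.1 hq₁₂ hq₁₃ hq₂₃
    (l₁₁₂.left_b₁ h₂₃ hq₁₂) (l₂₁₂.left_b₁ h₂₃ hq₁₂) (l₃₁₃.left_b₁ h₂₃ hq₁₃) l₁₁₂.1 l₁₁₃.1
    l₂₁₂.1 l₂₂₃.1 l₃₁₃.1 l₃₂₃.1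
  rcases hv with hv | hv
  · by_cases hvp : v = p₁.1
    · exact ⟨q₂₃, Or.inl ⟨hvp ▸ hv₂₃, Or.inl ⟨l₁₁₂.left_b₁ h₂₃ hq₁₂, Or.inl hq₂₃⟩⟩,
        Or.inl l₂₂₃, Or.inl l₃₂₃⟩
    -- `v` and `p₁` both lie below `q₁₂` and `q₁₃`, which therefore coincide
    have hle := relLe_of_bowtie h₁₂ h₁₃ h₂₃ hbow hvp hq₁₂ ⟨hv₁₂, Or.inl ⟨hv, Or.inl hq₁₂⟩⟩ l₁₁₂
      ⟨hv₁₃, Or.inl ⟨hv, Or.inl hq₁₃⟩⟩ l₁₁₃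
    have heq : q₁₂ = q₁₃ := Subtype.ext (eq_of_pmeets (hq₁₂.trans hq₁₃.symm) hle.pmeets)
    exact ⟨q₁₂, Or.inl l₁₁₂, Or.inl l₂₁₂, Or.inl (heq ▸ l₃₁₃)⟩
  · have lt_v : ∀ {q : {v : PVertex Λ // D3Ok b v}}, q.1.1 = {b 3} → pmeets q.1 v →
        d3Lt b q.1 v := fun hq h => ⟨h, Or.inr ⟨hq, hv⟩⟩
    exact ⟨⟨v, Or.inr (Or.inl hv)⟩, Or.inl (_root_.trans l₁₁₂ (lt_v hq₁₂ (pmeets_comm.1 hv₁₂))),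
      Or.inl (_root_.trans l₂₁₂ (lt_v hq₁₂ (pmeets_comm.1 hv₁₂))),
      Or.inl (_root_.trans l₃₁₃ (lt_v hq₁₃ (pmeets_comm.1 hv₁₃)))⟩

theorem weaklyUpwardFlag_iff_starHelly [IsTrans (PVertex Λ) (d3Lt b)] :
    RelWeaklyUpwardFlag (fun v w : {v : PVertex Λ // D3Ok b v} => d3Lt b v.1 w.1) ↔
      Λ.StarHelly b (b 1) :=
  ⟨starHelly_of_weaklyUpwardFlag h₁₂ h₁₃ h₂₃ hbow,
    weaklyUpwardFlag_of_starHelly h₁₂ h₁₃ h₂₃ hbow⟩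

/-- Exchanging `b 1` and `b 2` reverses the order on `Δ_{Λ,Λ'}`. -/
theorem weaklyDownwardFlag_iff_starHelly [IsTrans (PVertex Λ) (d3Lt b)] :
    RelWeaklyDownwardFlag (fun v w : {v : PVertex Λ // D3Ok b v} => d3Lt b v.1 w.1) ↔
      Λ.StarHelly b (b 2) := by
  have : IsTrans (PVertex Λ) (d3Lt (b ∘ Equiv.swap 1 2)) := by
    rw [d3Lt_swap]
    exact ⟨fun u v w h₁ h₂ => IsTrans.trans (r := d3Lt b) w v u h₂ h₁⟩
  have key := weaklyUpwardFlag_iff_starHelly (b := b ∘ Equiv.swap 1 2) (by simpa using h₁₂.symm)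
    (by simpa [Equiv.swap_apply_of_ne_of_ne] using h₂₃)
    (by simpa [Equiv.swap_apply_of_ne_of_ne] using h₁₃) (bowtieFree_swap hbow)
  rw [d3Ok_swap, d3Lt_swap, starHelly_swap] at key
  simp only [Function.comp_apply, Equiv.swap_apply_left] at key
  exact relWeaklyUpwardFlag_flip.symm.trans key

end WeakFlagness

section Subdivision

theorem subdivTau_two_iff {T : Set S} {k : ℕ} :
    subdivTau b 2 T k ↔
      k = 1 ∧ (T = {b 1} ∨ T = {b 2}) ∨ k = 2 ∧ T = {b 1, b 2} ∨ k = 3 ∧ T = {b 3} := by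
  refine or_congr_right (or_congr_right ⟨?_, ?_⟩)
  · rintro ⟨h₃, h₃', rfl⟩
    obtain rfl : k = 3 := by omega
    exact ⟨rfl, rfl⟩
  · rintro ⟨rfl, rfl⟩
    exact ⟨le_rfl, le_rfl, rfl⟩

theorem subOk_two_iff {v : PVertex Λ} :
    SubOk b 2 v ↔ IsEnd b v ∨ v.1 = {b 1, b 2} ∨ v.1 = {b 3} := by
  constructor
  · rintro (h | ⟨i, h₁, h₃, h⟩)
    · exact Or.inr (Or.inl h)
    · interval_cases i
      · exact Or.inl (Or.inl h)
      · exact Or.inl (Or.inr h)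
      · exact Or.inr (Or.inr h)
  · rintro ((h | h) | h | h)
    · exact Or.inr ⟨1, le_rfl, by norm_num, h⟩
    · exact Or.inr ⟨2, by norm_num, by norm_num, h⟩
    · exact Or.inl h
    · exact Or.inr ⟨3, by norm_num, le_rfl, h⟩

theorem subLt_two_iff {v w : PVertex Λ} :
    SubLt b 2 v w ↔ pmeets v w ∧
      (IsEnd b v ∧ (w.1 = {b 1, b 2} ∨ w.1 = {b 3}) ∨ v.1 = {b 1, b 2} ∧ w.1 = {b 3}) := by
  simp only [SubLt, subdivTau_two_iff, IsEnd]
  refine and_congr_right fun _ => ⟨?_, ?_⟩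
  · rintro ⟨k, l, ⟨rfl, hv⟩ | ⟨rfl, hv⟩ | ⟨rfl, hv⟩, ⟨rfl, hw⟩ | ⟨rfl, hw⟩ | ⟨rfl, hw⟩, hkl⟩ <;>
      first | omega | tauto
  · rintro (⟨hv, hw | hw⟩ | ⟨hv, hw⟩)
    · exact ⟨1, 2, Or.inl ⟨rfl, hv⟩, Or.inr (Or.inl ⟨rfl, hw⟩), by norm_num⟩
    · exact ⟨1, 3, Or.inl ⟨rfl, hv⟩, Or.inr (Or.inr ⟨rfl, hw⟩), by norm_num⟩
    · exact ⟨2, 3, Or.inr (Or.inl ⟨rfl, hv⟩), Or.inr (Or.inr ⟨rfl, hw⟩), by norm_num⟩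

theorem isTrans_subLt (h₁₂ : b 1 ≠ b 2) (h₁₃ : b 1 ≠ b 3) (h₂₃ : b 2 ≠ b 3) :
    IsTrans (PVertex Λ) (SubLt b 2) := by
  refine ⟨fun u v w huv hvw => ?_⟩
  rw [subLt_two_iff] at huv hvw ⊢
  obtain ⟨hu, hv, hw⟩ : IsEnd b u ∧ v.1 = {b 1, b 2} ∧ w.1 = {b 3} := by
    obtain ⟨-, ⟨hu, hv | hv⟩ | ⟨hu, hv⟩⟩ := huv <;>
      obtain ⟨-, ⟨hv' | hv', hw | hw⟩ | ⟨hv', hw⟩⟩ := hvw <;>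
      simp_all [IsEnd, Set.pair_ne_singleton h₁₂, (Set.pair_ne_singleton h₁₂).symm]
  refine ⟨pmeets_trans_of_subset ?_ huv.1 hvw.1, Or.inl ⟨hu, Or.inr hw⟩⟩
  rw [hv]
  rcases hu with hu | hu <;> simp [hu]

def lowerEnds (b : ℕ → S) (p : PVertex Λ) : Set (PVertex Λ) :=
  {v | IsEnd b v ∧ RelLe (SubLt b 2) v p}

theorem exists_mem_lowerEnds {p : PVertex Λ} (hp : SubOk b 2 p) : ∃ e, e ∈ lowerEnds b p := by
  rcases subOk_two_iff.1 hp with hp | hp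
  · exact ⟨p, hp, Or.inr rfl⟩
  · obtain ⟨e, he, hep⟩ := exists_pmeets p {b 1}
    exact ⟨e, Or.inl he, Or.inl (subLt_two_iff.2 ⟨hep, Or.inl ⟨Or.inl he, hp⟩⟩)⟩

theorem lowerEnds_of_isEnd (h₁₂ : b 1 ≠ b 2) (h₁₃ : b 1 ≠ b 3) (h₂₃ : b 2 ≠ b 3)
    {v : PVertex Λ} (hv : IsEnd b v) : lowerEnds b v = {v} := by
  ext w
  refine ⟨fun ⟨_, hw⟩ => hw.resolve_left fun h => ?_, fun h => ?_⟩
  · obtain ⟨-, ⟨-, h | h⟩ | ⟨-, h⟩⟩ := subLt_two_iff.1 h <;>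
      simp_all [IsEnd, Set.pair_ne_singleton h₁₂, h₁₃.symm, h₂₃.symm]
  · rw [Set.mem_singleton_iff.1 h]
    exact ⟨hv, Or.inr rfl⟩

theorem lowerEnds_of_mid (h₁₂ : b 1 ≠ b 2) {m : PVertex Λ} (hm : m.1 = {b 1, b 2}) :
    ∃ x y : PVertex Λ, x.1 = {b 1} ∧ y.1 = {b 2} ∧ pmeets x y ∧ lowerEnds b m = {x, y} := by
  have sub : ∀ {v : PVertex Λ}, IsEnd b v → v.1 ⊆ m.1 := by
    rintro v (h | h) <;> simp [h, hm]
  have lt_m : ∀ {v : PVertex Λ}, IsEnd b v → pmeets v m → SubLt b 2 v m :=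
    fun hv h => subLt_two_iff.2 ⟨h, Or.inl ⟨hv, Or.inl hm⟩⟩
  obtain ⟨x, hx, hxm⟩ := exists_pmeets m {b 1}
  obtain ⟨y, hy, hym⟩ := exists_pmeets m {b 2}
  refine ⟨x, y, hx, hy, pmeets_trans_of_subset (sub (Or.inl hx)) hxm (pmeets_comm.1 hym), ?_⟩
  ext v
  constructor
  · rintro ⟨hv, hvm | rfl⟩
    · have hvm := (subLt_two_iff.1 hvm).1
      rcases hv with hv | hv
      · exact Or.inl (eq_of_pmeets (hv.trans hx.symm)
          (pmeets_trans_of_subset (sub (Or.inl hv)) hvm (pmeets_comm.1 hxm)))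
      · exact Or.inr (eq_of_pmeets (hv.trans hy.symm)
          (pmeets_trans_of_subset (sub (Or.inr hv)) hvm (pmeets_comm.1 hym)))
    · simp_all [IsEnd, Set.pair_ne_singleton h₁₂]
  · rintro (rfl | rfl)
    · exact ⟨Or.inl hx, Or.inl (lt_m (Or.inl hx) hxm)⟩
    · exact ⟨Or.inr hy, Or.inl (lt_m (Or.inr hy) hym)⟩

theorem lowerEnds_of_b₃ {z : PVertex Λ} (hz : z.1 = {b 3}) :
    lowerEnds b z = {v | IsEnd b v ∧ pmeets v z} := by
  ext v
  refine and_congr_right fun hv =>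
    ⟨?_, fun h => Or.inl (subLt_two_iff.2 ⟨h, Or.inl ⟨hv, Or.inr hz⟩⟩)⟩
  rintro (h | rfl)
  · exact (subLt_two_iff.1 h).1
  · exact pmeets_self v

/-- Every vertex of the subdivision lies above a vertex of type `b̂ 1` or `b̂ 2`, so common
lower bounds may be taken among those. -/
theorem downwardFlag_subdivision_iff (h₁₂ : b 1 ≠ b 2) (h₁₃ : b 1 ≠ b 3) (h₂₃ : b 2 ≠ b 3) :
    RelDownwardFlag (fun v w : {v : PVertex Λ // SubOk b 2 v} => SubLt b 2 v.1 w.1) ↔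
      ∀ p₁ p₂ p₃ : PVertex Λ, SubOk b 2 p₁ → SubOk b 2 p₂ → SubOk b 2 p₃ →
        HellyTriple (lowerEnds b p₁) (lowerEnds b p₂) (lowerEnds b p₃) := by
  have := isTrans_subLt (Λ := Λ) h₁₂ h₁₃ h₂₃
  have key : ∀ P : PVertex Λ → Prop, (∀ e q, RelLe (SubLt b 2) e q → P q → P e) →
      ((∃ q : {v // SubOk b 2 v}, P q.1) ↔ ∃ e, IsEnd b e ∧ P e) := by
    intro P hP
    refine ⟨fun ⟨q, hq⟩ => ?_, fun ⟨e, he, hPe⟩ => ⟨⟨e, subOk_two_iff.2 (Or.inl he)⟩, hPe⟩⟩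
    obtain ⟨e, he, heq⟩ := exists_mem_lowerEnds q.2
    exact ⟨e, he, hP e q.1 heq hq⟩
  have two : ∀ p₁ p₂ : PVertex Λ, (∃ q : {v // SubOk b 2 v},
      RelLe (SubLt b 2) q.1 p₁ ∧ RelLe (SubLt b 2) q.1 p₂) ↔
        (lowerEnds b p₁ ∩ lowerEnds b p₂).Nonempty := by
    intro p₁ p₂
    refine (key (fun e => RelLe (SubLt b 2) e p₁ ∧ RelLe (SubLt b 2) e p₂)
      fun e q he hq => ⟨he.trans hq.1, he.trans hq.2⟩).trans ?_
    simp only [Set.Nonempty, lowerEnds, Set.mem_inter_iff, Set.mem_ofPred_eq]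
    tauto
  have three : ∀ p₁ p₂ p₃ : PVertex Λ, (∃ q : {v // SubOk b 2 v},
      RelLe (SubLt b 2) q.1 p₁ ∧ RelLe (SubLt b 2) q.1 p₂ ∧ RelLe (SubLt b 2) q.1 p₃) ↔
        (lowerEnds b p₁ ∩ lowerEnds b p₂ ∩ lowerEnds b p₃).Nonempty := by
    intro p₁ p₂ p₃
    refine (key (fun e => RelLe (SubLt b 2) e p₁ ∧ RelLe (SubLt b 2) e p₂ ∧
      RelLe (SubLt b 2) e p₃) fun e q he hq =>
        ⟨he.trans hq.1, he.trans hq.2.1, he.trans hq.2.2⟩).trans ?_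
    simp only [Set.Nonempty, lowerEnds, Set.mem_inter_iff, Set.mem_ofPred_eq]
    tauto
  simp only [RelDownwardFlag, relLe_subtype, two, three, HellyTriple]
  exact ⟨fun h p₁ p₂ p₃ hp₁ hp₂ hp₃ => h ⟨p₁, hp₁⟩ ⟨p₂, hp₂⟩ ⟨p₃, hp₃⟩,
    fun h p₁ p₂ p₃ => h p₁.1 p₂.1 p₃.1 p₁.2 p₂.2 p₃.2⟩

variable (h₁₂ : b 1 ≠ b 2) (h₁₃ : b 1 ≠ b 3) (h₂₃ : b 2 ≠ b 3)
  (hbow : RelBowtieFree (fun v w : {v : PVertex Λ // D3Ok b v} => d3Lt b v.1 w.1))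

include h₁₂ h₁₃ h₂₃ hbow

theorem hellyTriple_edge_edge_b₃ {x₁ x₂ y₁ y₂ z : PVertex Λ} (hx₁ : x₁.1 = {b 1})
    (hx₂ : x₂.1 = {b 1}) (hy₁ : y₁.1 = {b 2}) (hy₂ : y₂.1 = {b 2}) (e₁ : pmeets x₁ y₁)
    (e₂ : pmeets x₂ y₂) (hz : z.1 = {b 3}) :
    HellyTriple {x₁, y₁} {x₂, y₂} {v | IsEnd b v ∧ pmeets v z} := by
  intro h₁₂' h₂₃' h₁₃'
  rw [Set.pair_inter_nonempty] at h₂₃' h₁₃'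
  rcases eq_or_eq_of_pair_inter_pair (P := fun v : PVertex Λ => v.1 = {b 1}) hx₁ hx₂
    (by simp [hy₁, h₁₂.symm]) (by simp [hy₂, h₁₂.symm]) h₁₂' with rfl | rfl
  · by_cases hxz : pmeets x₁ z
    · exact ⟨x₁, ⟨Or.inl rfl, Or.inl rfl⟩, Or.inl hx₁, hxz⟩
    have hy₁z := h₁₃'.resolve_left fun h => hxz h.2
    have hy₂z := h₂₃'.resolve_left fun h => hxz h.2
    by_cases hyy : y₁ = y₂
    · exact ⟨y₁, ⟨Or.inr rfl, Or.inr hyy⟩, hy₁z⟩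
    exact absurd (pmeets_of_two_b₂ h₁₂ h₁₃ h₂₃ hbow hy₁ hy₂ hz hx₁ hyy
      (pmeets_comm.1 hy₁z.2) (pmeets_comm.1 hy₂z.2) e₁ e₂) hxz
  · by_cases hyz : pmeets y₁ z
    · exact ⟨y₁, ⟨Or.inr rfl, Or.inr rfl⟩, Or.inr hy₁, hyz⟩
    have hx₁z := h₁₃'.resolve_right fun h => hyz h.2
    have hx₂z := h₂₃'.resolve_right fun h => hyz h.2
    by_cases hxx : x₁ = x₂
    · exact ⟨x₁, ⟨Or.inl rfl, Or.inl hxx⟩, hx₁z⟩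
    exact absurd (pmeets_comm.1 (pmeets_of_two_b₁ h₁₂ h₁₃ h₂₃ hbow hx₁ hx₂ hz hy₁ hxx
      hx₁z.2 hx₂z.2 e₁ e₂)) hyz

variable [IsTrans (PVertex Λ) (d3Lt b)]

theorem hellyTriple_edge_b₃_b₃ {x y z₁ z₂ : PVertex Λ} (hx : x.1 = {b 1}) (hy : y.1 = {b 2})
    (hxy : pmeets x y) (hz₁ : z₁.1 = {b 3}) (hz₂ : z₂.1 = {b 3}) :
    HellyTriple {x, y} {v | IsEnd b v ∧ pmeets v z₁} {v | IsEnd b v ∧ pmeets v z₂} := by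
  rintro h₁ ⟨w, ⟨hw, hw₁⟩, -, hw₂⟩ h₂
  rw [Set.pair_inter_nonempty] at h₁ h₂
  -- through a common neighbour `w` of `z₁` and `z₂`, the bowtie condition moves a neighbour
  -- in `{x, y}` of one `zᵢ` to the other
  have cross : ∀ {za zb : PVertex Λ}, za.1 = {b 3} → zb.1 = {b 3} → pmeets w za →
      pmeets w zb → pmeets x za → pmeets y zb → pmeets x zb ∨ pmeets y za := by
    intro za zb hza hzb hwa hwb hxa hyb
    rcases hw with hw | hw
    · by_cases hwx : x = w
      · exact Or.inl (hwx ▸ hwb)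
      exact Or.inr (pmeets_comm.1 (pmeets_of_two_b₁ h₁₂ h₁₃ h₂₃ hbow hx hw hza hy hwx hxa hwa
        hxy (pmeets_trans_b₃ hw hzb hy hwb (pmeets_comm.1 hyb))))
    · by_cases hwy : y = w
      · exact Or.inr (hwy ▸ hwa)
      exact Or.inl (pmeets_of_two_b₂ h₁₂ h₁₃ h₂₃ hbow hy hw hzb hx hwy (pmeets_comm.1 hyb)
        (pmeets_comm.1 hwb) hxy (pmeets_trans_b₃ hx hza hw hxa (pmeets_comm.1 hwa)))
  have hx' : IsEnd b x := Or.inl hx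
  have hy' : IsEnd b y := Or.inr hy
  suffices pmeets x z₁ ∧ pmeets x z₂ ∨ pmeets y z₁ ∧ pmeets y z₂ by
    rcases this with ⟨h₁, h₂⟩ | ⟨h₁, h₂⟩
    · exact ⟨x, ⟨Or.inl rfl, hx', h₁⟩, hx', h₂⟩
    · exact ⟨y, ⟨Or.inr rfl, hy', h₁⟩, hy', h₂⟩
  rcases h₁ with ⟨-, h₁⟩ | ⟨-, h₁⟩ <;> rcases h₂ with ⟨-, h₂⟩ | ⟨-, h₂⟩
  · exact Or.inl ⟨h₁, h₂⟩
  · exact (cross hz₁ hz₂ hw₁ hw₂ h₁ h₂).imp (⟨h₁, ·⟩) (⟨·, h₂⟩)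
  · exact (cross hz₂ hz₁ hw₂ hw₁ h₂ h₁).imp (⟨·, h₂⟩) (⟨h₁, ·⟩)
  · exact Or.inr ⟨h₁, h₂⟩

theorem exists_common_end_of_two_b₁ {z₁ z₂ z₃ x x' y : PVertex Λ} (hz₁ : z₁.1 = {b 3})
    (hz₂ : z₂.1 = {b 3}) (hz₃ : z₃.1 = {b 3}) (hx : x.1 = {b 1}) (hx' : x'.1 = {b 1})
    (hy : y.1 = {b 2}) (hxz₁ : pmeets x z₁) (hxz₂ : pmeets x z₂) (hx'z₁ : pmeets x' z₁)
    (hx'z₃ : pmeets x' z₃) (hyz₂ : pmeets y z₂) (hyz₃ : pmeets y z₃) :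
    ∃ v, IsEnd b v ∧ pmeets v z₁ ∧ pmeets v z₂ ∧ pmeets v z₃ := by
  by_cases hxx' : x = x'
  · exact ⟨x, Or.inl hx, hxz₁, hxz₂, hxx' ▸ hx'z₃⟩
  have hz₁y := pmeets_of_two_b₁ h₁₂ h₁₃ h₂₃ hbow hx hx' hz₁ hy hxx' hxz₁ hx'z₁
    (pmeets_trans_b₃ hx hz₂ hy hxz₂ (pmeets_comm.1 hyz₂))
    (pmeets_trans_b₃ hx' hz₃ hy hx'z₃ (pmeets_comm.1 hyz₃))
  exact ⟨y, Or.inr hy, pmeets_comm.1 hz₁y, hyz₂, hyz₃⟩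

theorem exists_common_end_of_two_b₂ {z₁ z₂ z₃ y y' x : PVertex Λ} (hz₁ : z₁.1 = {b 3})
    (hz₂ : z₂.1 = {b 3}) (hz₃ : z₃.1 = {b 3}) (hy : y.1 = {b 2}) (hy' : y'.1 = {b 2})
    (hx : x.1 = {b 1}) (hyz₁ : pmeets y z₁) (hyz₂ : pmeets y z₂) (hy'z₁ : pmeets y' z₁)
    (hy'z₃ : pmeets y' z₃) (hxz₂ : pmeets x z₂) (hxz₃ : pmeets x z₃) :
    ∃ v, IsEnd b v ∧ pmeets v z₁ ∧ pmeets v z₂ ∧ pmeets v z₃ := by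
  by_cases hyy' : y = y'
  · exact ⟨y, Or.inr hy, hyz₁, hyz₂, hyy' ▸ hy'z₃⟩
  have hxz₁ := pmeets_of_two_b₂ h₁₂ h₁₃ h₂₃ hbow hy hy' hz₁ hx hyy' (pmeets_comm.1 hyz₁)
    (pmeets_comm.1 hy'z₁) (pmeets_trans_b₃ hx hz₂ hy hxz₂ (pmeets_comm.1 hyz₂))
    (pmeets_trans_b₃ hx hz₃ hy' hxz₃ (pmeets_comm.1 hy'z₃))
  exact ⟨x, Or.inl hx, hxz₁, hxz₂, hxz₃⟩

theorem hellyTriple_b₃_b₃_b₃ (hX : Λ.StarHelly b (b 1)) (hY : Λ.StarHelly b (b 2))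
    {z₁ z₂ z₃ : PVertex Λ} (hz₁ : z₁.1 = {b 3}) (hz₂ : z₂.1 = {b 3}) (hz₃ : z₃.1 = {b 3}) :
    HellyTriple {v | IsEnd b v ∧ pmeets v z₁} {v | IsEnd b v ∧ pmeets v z₂}
      {v | IsEnd b v ∧ pmeets v z₃} := by
  rintro ⟨w₁₂, ⟨hw₁₂, m₁₂₁⟩, -, m₁₂₂⟩ ⟨w₂₃, ⟨hw₂₃, m₂₃₂⟩, -, m₂₃₃⟩ ⟨w₁₃, ⟨hw₁₃, m₁₃₁⟩, -, m₁₃₃⟩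
  suffices ∃ v, IsEnd b v ∧ pmeets v z₁ ∧ pmeets v z₂ ∧ pmeets v z₃ by
    obtain ⟨v, hv, h₁, h₂, h₃⟩ := this
    exact ⟨v, ⟨⟨hv, h₁⟩, hv, h₂⟩, hv, h₃⟩
  rcases hw₁₂ with hw₁₂ | hw₁₂ <;> rcases hw₁₃ with hw₁₃ | hw₁₃ <;>
    rcases hw₂₃ with hw₂₃ | hw₂₃
  · exact hX z₁ z₂ z₃ w₁₂ w₁₃ w₂₃ hz₁ hz₂ hz₃ hw₁₂ hw₁₃ hw₂₃ m₁₂₁ m₁₂₂ m₁₃₁ m₁₃₃ m₂₃₂ m₂₃₃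
  · exact exists_common_end_of_two_b₁ h₁₂ h₁₃ h₂₃ hbow hz₁ hz₂ hz₃ hw₁₂ hw₁₃ hw₂₃
      m₁₂₁ m₁₂₂ m₁₃₁ m₁₃₃ m₂₃₂ m₂₃₃
  · obtain ⟨v, hv, h₂, h₁, h₃⟩ := exists_common_end_of_two_b₁ h₁₂ h₁₃ h₂₃ hbow hz₂ hz₁ hz₃
      hw₁₂ hw₂₃ hw₁₃ m₁₂₂ m₁₂₁ m₂₃₂ m₂₃₃ m₁₃₁ m₁₃₃
    exact ⟨v, hv, h₁, h₂, h₃⟩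
  · obtain ⟨v, hv, h₃, h₁, h₂⟩ := exists_common_end_of_two_b₂ h₁₂ h₁₃ h₂₃ hbow hz₃ hz₁ hz₂
      hw₁₃ hw₂₃ hw₁₂ m₁₃₃ m₁₃₁ m₂₃₃ m₂₃₂ m₁₂₁ m₁₂₂
    exact ⟨v, hv, h₁, h₂, h₃⟩
  · obtain ⟨v, hv, h₃, h₁, h₂⟩ := exists_common_end_of_two_b₁ h₁₂ h₁₃ h₂₃ hbow hz₃ hz₁ hz₂
      hw₁₃ hw₂₃ hw₁₂ m₁₃₃ m₁₃₁ m₂₃₃ m₂₃₂ m₁₂₁ m₁₂₂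
    exact ⟨v, hv, h₁, h₂, h₃⟩
  · obtain ⟨v, hv, h₂, h₁, h₃⟩ := exists_common_end_of_two_b₂ h₁₂ h₁₃ h₂₃ hbow hz₂ hz₁ hz₃
      hw₁₂ hw₂₃ hw₁₃ m₁₂₂ m₁₂₁ m₂₃₂ m₂₃₃ m₁₃₁ m₁₃₃
    exact ⟨v, hv, h₁, h₂, h₃⟩
  · exact exists_common_end_of_two_b₂ h₁₂ h₁₃ h₂₃ hbow hz₁ hz₂ hz₃ hw₁₂ hw₁₃ hw₂₃
      m₁₂₁ m₁₂₂ m₁₃₁ m₁₃₃ m₂₃₂ m₂₃₃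
  · exact hY z₁ z₂ z₃ w₁₂ w₁₃ w₂₃ hz₁ hz₂ hz₃ hw₁₂ hw₁₃ hw₂₃ m₁₂₁ m₁₂₂ m₁₃₁ m₁₃₃ m₂₃₂ m₂₃₃

theorem hellyTriple_lowerEnds (hX : Λ.StarHelly b (b 1)) (hY : Λ.StarHelly b (b 2))
    {p₁ p₂ p₃ : PVertex Λ} (hp₁ : SubOk b 2 p₁) (hp₂ : SubOk b 2 p₂) (hp₃ : SubOk b 2 p₃) :
    HellyTriple (lowerEnds b p₁) (lowerEnds b p₂) (lowerEnds b p₃) := by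
  have shape : ∀ {p : PVertex Λ}, SubOk b 2 p → (∃ v, lowerEnds b p = {v}) ∨
      (∃ x y : PVertex Λ, x.1 = {b 1} ∧ y.1 = {b 2} ∧ pmeets x y ∧ lowerEnds b p = {x, y}) ∨
      ∃ z : PVertex Λ, z.1 = {b 3} ∧ lowerEnds b p = {v | IsEnd b v ∧ pmeets v z} := by
    intro p hp
    rcases subOk_two_iff.1 hp with hp | hp | hp
    · exact Or.inl ⟨p, lowerEnds_of_isEnd h₁₂ h₁₃ h₂₃ hp⟩
    · exact Or.inr (Or.inl (lowerEnds_of_mid h₁₂ hp))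
    · exact Or.inr (Or.inr ⟨p, hp, lowerEnds_of_b₃ hp⟩)
  rcases shape hp₁ with ⟨v, h₁⟩ | h₁
  · rw [h₁]
    exact .of_singleton
  rcases shape hp₂ with ⟨v, h₂⟩ | h₂
  · rw [h₂]
    exact HellyTriple.of_singleton.swap₁₂
  rcases shape hp₃ with ⟨v, h₃⟩ | h₃
  · rw [h₃]
    exact HellyTriple.of_singleton.swap₁₂.swap₂₃
  have not_b₁ : ∀ {y : PVertex Λ}, y.1 = {b 2} → ¬ y.1 = {b 1} := fun hy => by
    simp [hy, h₁₂.symm]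
  rcases h₁ with ⟨x₁, y₁, hx₁, hy₁, e₁, h₁⟩ | ⟨z₁, hz₁, h₁⟩ <;>
    rcases h₂ with ⟨x₂, y₂, hx₂, hy₂, e₂, h₂⟩ | ⟨z₂, hz₂, h₂⟩ <;>
    rcases h₃ with ⟨x₃, y₃, hx₃, hy₃, e₃, h₃⟩ | ⟨z₃, hz₃, h₃⟩ <;>
    rw [h₁, h₂, h₃]
  · exact .of_pairs (P := fun v : PVertex Λ => v.1 = {b 1}) hx₁ hx₂ hx₃
      (not_b₁ hy₁) (not_b₁ hy₂) (not_b₁ hy₃)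
  · exact hellyTriple_edge_edge_b₃ h₁₂ h₁₃ h₂₃ hbow hx₁ hx₂ hy₁ hy₂ e₁ e₂ hz₃
  · exact (hellyTriple_edge_edge_b₃ h₁₂ h₁₃ h₂₃ hbow hx₁ hx₃ hy₁ hy₃ e₁ e₃ hz₂).swap₂₃
  · exact hellyTriple_edge_b₃_b₃ h₁₂ h₁₃ h₂₃ hbow hx₁ hy₁ e₁ hz₂ hz₃
  · exact (hellyTriple_edge_edge_b₃ h₁₂ h₁₃ h₂₃ hbow hx₂ hx₃ hy₂ hy₃ e₂ e₃ hz₁).swap₂₃.swap₁₂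
  · exact (hellyTriple_edge_b₃_b₃ h₁₂ h₁₃ h₂₃ hbow hx₂ hy₂ e₂ hz₁ hz₃).swap₁₂
  · exact (hellyTriple_edge_b₃_b₃ h₁₂ h₁₃ h₂₃ hbow hx₃ hy₃ e₃ hz₁ hz₂).swap₁₂.swap₂₃
  · exact hellyTriple_b₃_b₃_b₃ h₁₂ h₁₃ h₂₃ hbow hX hY hz₁ hz₂ hz₃

theorem downwardFlag_subdivision_iff_starHelly :
    RelDownwardFlag (fun v w : {v : PVertex Λ // SubOk b 2 v} => SubLt b 2 v.1 w.1) ↔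
      Λ.StarHelly b (b 1) ∧ Λ.StarHelly b (b 2) := by
  rw [downwardFlag_subdivision_iff h₁₂ h₁₃ h₂₃]
  refine ⟨fun h => ⟨?_, ?_⟩, fun ⟨hX, hY⟩ _ _ _ => hellyTriple_lowerEnds h₁₂ h₁₃ h₂₃ hbow hX hY⟩
  all_goals
    intro z₁ z₂ z₃ x₁₂ x₁₃ x₂₃ hz₁ hz₂ hz₃ hx₁₂ hx₁₃ hx₂₃ m₁₂₁ m₁₂₂ m₁₃₁ m₁₃₃ m₂₃₂ m₂₃₃
    have ok : ∀ {z : PVertex Λ}, z.1 = {b 3} → SubOk b 2 z :=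
      fun hz => subOk_two_iff.2 (Or.inr (Or.inr hz))
    have H := h z₁ z₂ z₃ (ok hz₁) (ok hz₂) (ok hz₃)
    rw [lowerEnds_of_b₃ hz₁, lowerEnds_of_b₃ hz₂, lowerEnds_of_b₃ hz₃] at H
    have e₁₂ : IsEnd b x₁₂ := by simp [IsEnd, hx₁₂]
    have e₁₃ : IsEnd b x₁₃ := by simp [IsEnd, hx₁₃]
    have e₂₃ : IsEnd b x₂₃ := by simp [IsEnd, hx₂₃]
    obtain ⟨v, ⟨⟨hv, h₁⟩, -, h₂⟩, -, h₃⟩ := H ⟨x₁₂, ⟨e₁₂, m₁₂₁⟩, e₁₂, m₁₂₂⟩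
      ⟨x₂₃, ⟨e₂₃, m₂₃₂⟩, e₂₃, m₂₃₃⟩ ⟨x₁₃, ⟨e₁₃, m₁₃₁⟩, e₁₃, m₁₃₃⟩
    exact ⟨v, hv, h₁, h₂, h₃⟩

end Subdivision

end CoxDiagram

theorem weaklyFlag_iff_subdivision_downwardFlag_general {S : Type*}
    (Λ : CoxDiagram S) (b : ℕ → S)
    (hD : IsDLike Λ 2 b)
    (hadm : Admissible Λ (DSet b 2))
    (hbow : RelBowtieFree (fun v w : {v : PVertex Λ // D3Ok b v} => d3Lt b v.1 w.1)) :
    RelWeaklyFlag (fun v w : {v : PVertex Λ // D3Ok b v} => d3Lt b v.1 w.1) ↔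
      RelDownwardFlag (fun v w : {v : PVertex Λ // SubOk b 2 v} => SubLt b 2 v.1 w.1) := by
  have h₁₂ : b 1 ≠ b 2 := hD.ne (by norm_num) (by norm_num) (by norm_num)
  have h₁₃ : b 1 ≠ b 3 := hD.ne (by norm_num) (by norm_num) (by norm_num)
  have h₂₃ : b 2 ≠ b 3 := hD.ne (by norm_num) (by norm_num) (by norm_num)
  have := isTrans_d3Lt hD hadm
  rw [RelWeaklyFlag, weaklyUpwardFlag_iff_starHelly h₁₂ h₁₃ h₂₃ hbow,
    weaklyDownwardFlag_iff_starHelly h₁₂ h₁₃ h₂₃ hbow,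
    downwardFlag_subdivision_iff_starHelly h₁₂ h₁₃ h₂₃ hbow]

/-- Let `Λ` be a Coxeter diagram containing an admissible `D₃`-like
subdiagram `Λ′` with consecutive vertices `b 1, b 3, b 2` (a `D₃`-like diagram is a
`D_{n+1}`-like diagram with `n = 2`).  Suppose the vertex set of `Δ_{Λ,Λ′}` with the
partial order induced by `b 1 < b 3 < b 2` is bowtie free.  Then `Δ_{Λ,Λ′}` is weakly
flag if and only if the `(b 1, b 2)`-subdivision of `Δ_{Λ,Λ′}` is downward flag. -/
theorem weaklyFlag_iff_subdivision_downwardFlag {S : Type*} [Fintype S]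
    (Λ : CoxDiagram S) (b : ℕ → S)
    (hD : IsDLike Λ 2 b)
    (hadm : Admissible Λ (DSet b 2))
    (hbow : RelBowtieFree (fun v w : {v : PVertex Λ // D3Ok b v} => d3Lt b v.1 w.1)) :
    RelWeaklyFlag (fun v w : {v : PVertex Λ // D3Ok b v} => d3Lt b v.1 w.1) ↔
      RelDownwardFlag (fun v w : {v : PVertex Λ // SubOk b 2 v} => SubLt b 2 v.1 w.1) :=
  weaklyFlag_iff_subdivision_downwardFlag_general Λ b hD hadm hbow
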